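/- Let β, χ be real numbers with cos β ≠ 0, and set S = −[[i tan β, 1/cos β],[1/cos β, −i tan β]] ∈ M₂(ℂ) and E = exp(χσ₂) = (cosh χ)I + (sinh χ)σ₂. Then the intertwining relation E·S = S*·E holds if and only if tanh χ = sin β, where S* is the conjugate transpose of S. -/

import Mathlib

open Matrix Complex

/-!
Writing `S = -(i t σ₃ + r σ₁)` and `E = c + s σ₂`, the Pauli relations give
`E S - Sᴴ E = 2i (s r - c t) σ₃`, so `E S = Sᴴ E` iff `c t = s r`. For `t = tan β`,
`r = 1 / cos β`, `c = cosh χ`, `s = sinh χ` this is `cosh χ sin β = sinh χ`, i.e. `tanh χ = sin β`.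
-/

section Intertwining

variable (c s t r : ℝ)

lemma intertwining_sub_eq_smul_pauliZ :
    ((c : ℂ) • (1 : Matrix (Fin 2) (Fin 2) ℂ) + (s : ℂ) • !![0, -I; I, 0]) *
        -!![I * t, (r : ℂ); r, -I * t] -
      (-!![I * t, (r : ℂ); r, -I * t])ᴴ *
        ((c : ℂ) • (1 : Matrix (Fin 2) (Fin 2) ℂ) + (s : ℂ) • !![0, -I; I, 0]) =
      (2 * I * (s * r - c * t)) • !![(1 : ℂ), 0; 0, -1] := by
  ext i j
  fin_cases i <;> fin_cases j <;>
    simp [Matrix.mul_apply, Fin.sum_univ_two, Matrix.one_apply] <;> ring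

lemma intertwining_iff :
    ((c : ℂ) • (1 : Matrix (Fin 2) (Fin 2) ℂ) + (s : ℂ) • !![0, -I; I, 0]) *
        -!![I * t, (r : ℂ); r, -I * t] =
      (-!![I * t, (r : ℂ); r, -I * t])ᴴ *
        ((c : ℂ) • (1 : Matrix (Fin 2) (Fin 2) ℂ) + (s : ℂ) • !![0, -I; I, 0]) ↔
      c * t = s * r := by
  have hZ : !![(1 : ℂ), 0; 0, -1] ≠ 0 := fun h => by simpa using congrFun (congrFun h 0) 0
  rw [← sub_eq_zero, intertwining_sub_eq_smul_pauliZ, smul_eq_zero, or_iff_left hZ]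
  simp only [mul_eq_zero, two_ne_zero, I_ne_zero, or_self, false_or, sub_eq_zero]
  exact_mod_cast eq_comm

end Intertwining

lemma cosh_mul_tan_eq_sinh_div_cos_iff {β χ : ℝ} (hβ : Real.cos β ≠ 0) :
    Real.cosh χ * Real.tan β = Real.sinh χ * (1 / Real.cos β) ↔ Real.tanh χ = Real.sin β := by
  rw [Real.tanh_eq_sinh_div_cosh, div_eq_iff (Real.cosh_pos χ).ne', Real.tan_eq_sin_div_cos]
  constructor <;> intro h
  · field_simp at h; linarith
  · field_simp; linarith

/-- With `S = −[[i tan β, 1/cos β],[1/cos β, −i tan β]]` and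
`E = (cosh χ)I + (sinh χ)σ₂`, the intertwining relation `E·S = Sᴴ·E` holds if and only
if `tanh χ = sin β`. -/
theorem stmt14 (β χ : ℝ) (hβ : Real.cos β ≠ 0) :
    (((Real.cosh χ : ℂ) • (1 : Matrix (Fin 2) (Fin 2) ℂ)
        + (Real.sinh χ : ℂ) • !![(0 : ℂ), -I; I, 0]) *
      (-(!![I * Real.tan β, (1 : ℂ) / Real.cos β;
            (1 : ℂ) / Real.cos β, -I * Real.tan β]))
      = (-(!![I * Real.tan β, (1 : ℂ) / Real.cos β;
            (1 : ℂ) / Real.cos β, -I * Real.tan β]))ᴴ *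
        ((Real.cosh χ : ℂ) • (1 : Matrix (Fin 2) (Fin 2) ℂ)
          + (Real.sinh χ : ℂ) • !![(0 : ℂ), -I; I, 0]))
      ↔ Real.tanh χ = Real.sin β := by
  have h := intertwining_iff (Real.cosh χ) (Real.sinh χ) (Real.tan β) (1 / Real.cos β)
  rw [ofReal_div, ofReal_one] at h
  rw [h, cosh_mul_tan_eq_sinh_div_cos_iff hβ]
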